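/- Every two-dimensional convex lattice polygon Q contained in a two-dimensional convex lattice polygon P can be obtained from P by a finite sequence of shavings: there exist polygons Q = P⁽⁰⁾ ⊂ P⁽¹⁾ ⊂ ⋯ ⊂ P⁽ⁿ⁾ = P such that each P⁽ⁱ⁻¹⁾ = conv((P⁽ⁱ⁾ ∩ ℤ²) \ {vᵢ}) for some vertex vᵢ of P⁽ⁱ⁾. -/

import Mathlib

def IsLatticePolygon (P : Set (Fin 2 → ℝ)) : Prop :=
  (∃ s : Finset (Fin 2 → ℤ),
    P = convexHull ℝ ((fun v : Fin 2 → ℤ => fun i => (v i : ℝ)) '' (s : Set (Fin 2 → ℤ)))) ∧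
  (interior P).Nonempty

def latticePts (P : Set (Fin 2 → ℝ)) : Set (Fin 2 → ℝ) :=
  {x ∈ P | ∀ i, ∃ z : ℤ, x i = (z : ℝ)}

/-!
Induction on the number of lattice points of `P`. If `Q ≠ P`, then, `P` being the convex hull of
its extreme points, some vertex `v` of `P` lies outside `Q`. Every lattice point of `Q` is then a
lattice point of `P` other than `v`, so `Q` is contained in the shaved polygon `P_v`, which is
therefore again two-dimensional; and `P_v` has fewer lattice points than `P`, since it misses the
extreme point `v`.
-/

theorem Relation.ReflTransGen.exists_seq {α : Type*} {r : α → α → Prop} {a b : α}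
    (h : Relation.ReflTransGen r a b) :
    ∃ (n : ℕ) (c : ℕ → α), c 0 = a ∧ c n = b ∧ ∀ i < n, r (c i) (c (i + 1)) := by
  induction h with
  | refl => exact ⟨0, fun _ => a, rfl, rfl, by simp⟩
  | @tail b d _ hbd ih =>
    obtain ⟨n, c, hc0, hcn, hc⟩ := ih
    refine ⟨n + 1, fun i => if i ≤ n then c i else d, by simpa using hc0, by simp,
      fun i hi => ?_⟩
    rcases Nat.lt_succ_iff_lt_or_eq.1 hi with hi | rfl
    · simpa [hi.le, Nat.succ_le_of_lt hi] using hc i hi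
    · simpa [hcn] using hbd

theorem exists_mem_extremePoints_notMem_of_not_subset {E : Type*} [AddCommGroup E] [Module ℝ E]
    [TopologicalSpace E] [T2Space E] [IsTopologicalAddGroup E] [ContinuousSMul ℝ E]
    [LocallyConvexSpace ℝ E] {P Q : Set E} (hPc : IsCompact P) (hPcv : Convex ℝ P)
    (hQc : IsClosed Q) (hQcv : Convex ℝ Q) (hPQ : ¬ P ⊆ Q) :
    ∃ v ∈ Set.extremePoints ℝ P, v ∉ Q := by
  by_contra! h
  refine hPQ ?_
  calc P = closure (convexHull ℝ (Set.extremePoints ℝ P)) :=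
        (closure_convexHull_extremePoints hPc hPcv).symm
    _ ⊆ closure Q := closure_mono (convexHull_min h hQcv)
    _ = Q := hQc.closure_eq

abbrev latticeCast (v : Fin 2 → ℤ) : Fin 2 → ℝ := fun i => (v i : ℝ)

theorem isClosedEmbedding_latticeCast : Topology.IsClosedEmbedding latticeCast :=
  .piMap fun _ => Int.isClosedEmbedding_coe_real

theorem latticePts_eq_inter_range (P : Set (Fin 2 → ℝ)) :
    latticePts P = P ∩ Set.range latticeCast := by
  ext x
  simp only [latticePts, Set.mem_ofPred_eq, Set.mem_inter_iff, Set.mem_range, funext_iff,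
    eq_comm (a := x _)]
  exact and_congr_right fun _ => Classical.skolem

theorem latticePts_subset_range (P : Set (Fin 2 → ℝ)) :
    latticePts P ⊆ Set.range latticeCast :=
  latticePts_eq_inter_range P ▸ Set.inter_subset_right

theorem latticePts_subset (P : Set (Fin 2 → ℝ)) : latticePts P ⊆ P := fun _ hx => hx.1

theorem latticePts_mono {P P' : Set (Fin 2 → ℝ)} (h : P ⊆ P') :
    latticePts P ⊆ latticePts P' :=
  fun _ hx => ⟨h hx.1, hx.2⟩

theorem finite_latticePts {P : Set (Fin 2 → ℝ)} (hP : Bornology.IsBounded P) :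
    (latticePts P).Finite := by
  rw [latticePts_eq_inter_range]
  exact Metric.finite_isBounded_inter_isClosed
    isClosedEmbedding_latticeCast.isInducing.isDiscrete_range hP
    isClosedEmbedding_latticeCast.isClosed_range

namespace IsLatticePolygon

variable {P Q : Set (Fin 2 → ℝ)}

theorem isCompact (hP : IsLatticePolygon P) : IsCompact P := by
  obtain ⟨s, rfl⟩ := hP.1
  exact (s.finite_toSet.image _).isCompact_convexHull ℝ

theorem convex (hP : IsLatticePolygon P) : Convex ℝ P := by
  obtain ⟨s, rfl⟩ := hP.1
  exact convex_convexHull ℝ _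

theorem finite_latticePts (hP : IsLatticePolygon P) : (latticePts P).Finite :=
  _root_.finite_latticePts hP.isCompact.isBounded

theorem convexHull_latticePts (hP : IsLatticePolygon P) : convexHull ℝ (latticePts P) = P := by
  refine (convexHull_min (latticePts_subset P) hP.convex).antisymm ?_
  obtain ⟨s, hs⟩ := hP.1
  have hsP : latticeCast '' s ⊆ latticePts P := latticePts_eq_inter_range P ▸
    Set.subset_inter (hs ▸ subset_convexHull ℝ _) (Set.image_subset_range _ _)
  exact hs.trans_subset (convexHull_mono hsP)

theorem extremePoints_subset_latticePts (hP : IsLatticePolygon P) :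
    Set.extremePoints ℝ P ⊆ latticePts P := by
  conv_lhs => rw [← hP.convexHull_latticePts]
  exact extremePoints_convexHull_subset

end IsLatticePolygon

theorem isLatticePolygon_convexHull {A : Set (Fin 2 → ℝ)} (hA : A.Finite)
    (hAZ : A ⊆ Set.range latticeCast) (hint : (interior (convexHull ℝ A)).Nonempty) :
    IsLatticePolygon (convexHull ℝ A) := by
  refine ⟨⟨(hA.preimage isClosedEmbedding_latticeCast.injective.injOn).toFinset, ?_⟩, hint⟩
  rw [Set.Finite.coe_toFinset, Set.image_preimage_eq_of_subset hAZ]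

def shave (P : Set (Fin 2 → ℝ)) (v : Fin 2 → ℝ) : Set (Fin 2 → ℝ) :=
  convexHull ℝ (latticePts P \ {v})

def IsShaving (R S : Set (Fin 2 → ℝ)) : Prop :=
  IsLatticePolygon R ∧ ∃ v ∈ Set.extremePoints ℝ S, R = shave S v

section Shave

variable {P Q : Set (Fin 2 → ℝ)} {v : Fin 2 → ℝ}

theorem shave_subset_sdiff (hP : Convex ℝ P) (hv : v ∈ Set.extremePoints ℝ P) :
    shave P v ⊆ P \ {v} :=
  convexHull_min (Set.sdiff_subset_sdiff_left (latticePts_subset P))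
    (hP.mem_extremePoints_iff_convex_sdiff.1 hv).2

theorem latticePts_shave_ssubset (hP : IsLatticePolygon P) (hv : v ∈ Set.extremePoints ℝ P) :
    latticePts (shave P v) ⊂ latticePts P := by
  refine LE.le.trans_ssubset (b := latticePts P \ {v}) ?_
    (Set.sdiff_singleton_ssubset.2 (hP.extremePoints_subset_latticePts hv))
  intro x hx
  obtain ⟨hxP, hxv⟩ := shave_subset_sdiff hP.convex hv hx.1
  exact ⟨⟨hxP, hx.2⟩, hxv⟩

theorem subset_shave (hQ : IsLatticePolygon Q) (hQP : Q ⊆ P) (hv : v ∉ Q) :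
    Q ⊆ shave P v := by
  conv_lhs => rw [← hQ.convexHull_latticePts]
  refine convexHull_mono fun x hx => ⟨latticePts_mono hQP hx, ?_⟩
  rintro rfl
  exact hv hx.1

theorem isLatticePolygon_shave (hP : IsLatticePolygon P) (hQ : IsLatticePolygon Q)
    (hQv : Q ⊆ shave P v) : IsLatticePolygon (shave P v) :=
  isLatticePolygon_convexHull hP.finite_latticePts.sdiff
    (Set.sdiff_subset.trans (latticePts_subset_range P))
    (hQ.2.mono (interior_mono hQv))

end Shave

theorem IsLatticePolygon.reflTransGen_isShaving {P Q : Set (Fin 2 → ℝ)}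
    (hP : IsLatticePolygon P) (hQ : IsLatticePolygon Q) (hQP : Q ⊆ P) :
    Relation.ReflTransGen IsShaving Q P := by
  induction hn : (latticePts P).ncard using Nat.strong_induction_on generalizing P with
  | _ n ih =>
  by_cases hPQ : P ⊆ Q
  · rw [hQP.antisymm hPQ]
  obtain ⟨v, hvP, hvQ⟩ := exists_mem_extremePoints_notMem_of_not_subset hP.isCompact hP.convex
    hQ.isCompact.isClosed hQ.convex hPQ
  have hQv : Q ⊆ shave P v := subset_shave hQ hQP hvQ
  have hPv : IsLatticePolygon (shave P v) := isLatticePolygon_shave hP hQ hQv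
  have hcard : (latticePts (shave P v)).ncard < n :=
    hn ▸ Set.ncard_lt_ncard (latticePts_shave_ssubset hP hvP) hP.finite_latticePts
  exact (ih _ hcard hPv hQv rfl).tail ⟨hPv, v, hvP, rfl⟩

theorem stmt_12 (P Q : Set (Fin 2 → ℝ)) (hP : IsLatticePolygon P)
    (hQ : IsLatticePolygon Q) (hsub : Q ⊆ P) :
    ∃ (n : ℕ) (c : ℕ → Set (Fin 2 → ℝ)),
      c 0 = Q ∧ c n = P ∧
      ∀ i < n, IsLatticePolygon (c i) ∧
        ∃ v ∈ Set.extremePoints ℝ (c (i + 1)),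
          c i = convexHull ℝ (latticePts (c (i + 1)) \ {v}) :=
  (hP.reflTransGen_isShaving hQ hsub).exists_seq
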